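/- Let N ≥ 2, let η ≥ 0 and ζ ∈ ℝ, and let F be the BCD-type prepotential with parameters (η, ζ) and with Λ = e^{(6(N−1+η)+4ζ)/(4(N−1+η))} on the cone C = {x ∈ ℝ^N : x_1 > ⋯ > x_N > 0}. Then for all x ∈ C and every index i, e^{T_ii(x)} = x_i^{2η} · ∏_{q>i} (x_i² − x_q²) · ∏_{q<i} (x_q² − x_i²), where T_ii(x) = ∂²F/∂x_i²(x) and x_i^{2η} denotes the real power of the positive number x_i. -/

import Mathlib

open Real Finset

/-- Partial derivative in the `i`-th coordinate direction. -/
noncomputable def pd {N : ℕ} (i : Fin N) (f : (Fin N → ℝ) → ℝ) : (Fin N → ℝ) → ℝ :=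
  fun x => fderiv ℝ f x (Pi.single i 1)

/-- Hessian entry `T_ij = ∂²f/∂x_i∂x_j`. -/
noncomputable def hess {N : ℕ} (f : (Fin N → ℝ) → ℝ) (i j : Fin N) : (Fin N → ℝ) → ℝ :=
  pd i (pd j f)

/-- The open cone `x₁ > x₂ > ⋯ > x_N > 0`. -/
def cone (N : ℕ) : Set (Fin N → ℝ) := {x | StrictAnti x ∧ ∀ i, 0 < x i}

/-- The BCD-type prepotential with parameters `η, ζ` and cut-off `Λ`. -/
noncomputable def FBCD (N : ℕ) (η ζ Λ : ℝ) (x : Fin N → ℝ) : ℝ :=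
  (1/2) * ∑ i : Fin N, ∑ j : Fin N,
      (if i < j then (x i - x j)^2 * Real.log ((x i - x j)/Λ)
                      + (x i + x j)^2 * Real.log ((x i + x j)/Λ) else 0)
  + η * ∑ i : Fin N, (x i)^2 * Real.log (x i / Λ)
  + ζ * ∑ i : Fin N, (x i)^2


open Real Finset

noncomputable def prj {N : ℕ} (p : Fin N) : (Fin N → ℝ) →L[ℝ] ℝ := ContinuousLinearMap.proj p

noncomputable def LA {N : ℕ} (p q : Fin N) : (Fin N → ℝ) →L[ℝ] ℝ := prj p - prj q
noncomputable def LB {N : ℕ} (p q : Fin N) : (Fin N → ℝ) →L[ℝ] ℝ := prj p + prj q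

@[simp] lemma prj_apply {N : ℕ} (p : Fin N) (y : Fin N → ℝ) : prj p y = y p := rfl
@[simp] lemma LA_apply {N : ℕ} (p q : Fin N) (y : Fin N → ℝ) : LA p q y = y p - y q := rfl
@[simp] lemma LB_apply {N : ℕ} (p q : Fin N) (y : Fin N → ℝ) : LB p q y = y p + y q := rfl

lemma hasDerivAt_phi (Λ u : ℝ) (hΛ : Λ ≠ 0) (hu : u ≠ 0) :
    HasDerivAt (fun u => u^2 * Real.log (u/Λ)) (2*u*Real.log (u/Λ) + u) u := by
  have hdiv : u / Λ ≠ 0 := div_ne_zero hu hΛ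
  have hlog : HasDerivAt (fun u => Real.log (u/Λ)) ((u/Λ)⁻¹ * (1/Λ)) u := by
    have := (Real.hasDerivAt_log hdiv).comp u ((hasDerivAt_id u).div_const Λ)
    simpa [Function.comp_def] using this
  have := (hasDerivAt_pow 2 u).mul hlog
  refine this.congr_deriv ?_
  field_simp
  ring

lemma hasDerivAt_phi' (Λ u : ℝ) (hΛ : Λ ≠ 0) (hu : u ≠ 0) :
    HasDerivAt (fun u => 2*u*Real.log (u/Λ) + u) (2*Real.log (u/Λ) + 3) u := by
  have hdiv : u / Λ ≠ 0 := div_ne_zero hu hΛ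
  have hlog : HasDerivAt (fun u => Real.log (u/Λ)) ((u/Λ)⁻¹ * (1/Λ)) u := by
    have := (Real.hasDerivAt_log hdiv).comp u ((hasDerivAt_id u).div_const Λ)
    simpa [Function.comp_def] using this
  have h1 : HasDerivAt (fun u : ℝ => 2*u) 2 u := by
    simpa using (hasDerivAt_id u).const_mul (2:ℝ)
  have := (h1.mul hlog).add (hasDerivAt_id u)
  refine this.congr_deriv ?_
  field_simp
  ring

/-- first-derivative of FBCD as a continuous linear map -/
noncomputable def DF {N : ℕ} (η ζ Λ : ℝ) (y : Fin N → ℝ) : (Fin N → ℝ) →L[ℝ] ℝ :=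
  (1/2 : ℝ) • (∑ p : Fin N, ∑ q : Fin N,
      if p < q then (2*(y p - y q)*Real.log ((y p - y q)/Λ) + (y p - y q)) • LA p q
                    + (2*(y p + y q)*Real.log ((y p + y q)/Λ) + (y p + y q)) • LB p q else 0)
  + η • (∑ p : Fin N, (2*(y p)*Real.log ((y p)/Λ) + y p) • prj p)
  + ζ • (∑ p : Fin N, (2 * y p) • prj p)

lemma cone_mem {N : ℕ} {y : Fin N → ℝ} (hy : y ∈ cone N) :
    (∀ p q : Fin N, p < q → y q < y p) ∧ ∀ p, 0 < y p := ⟨fun p q h => hy.1 h, hy.2⟩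

lemma hasFDerivAt_FBCD {N : ℕ} (η ζ Λ : ℝ) (hΛ : Λ ≠ 0) {y : Fin N → ℝ} (hy : y ∈ cone N) :
    HasFDerivAt (FBCD N η ζ Λ) (DF η ζ Λ y) y := by
  obtain ⟨hlt, hpos⟩ := cone_mem hy
  have hS : HasFDerivAt
      (fun x : Fin N → ℝ => ∑ p : Fin N, ∑ q : Fin N,
        (if p < q then (x p - x q)^2 * Real.log ((x p - x q)/Λ)
                      + (x p + x q)^2 * Real.log ((x p + x q)/Λ) else 0))
      (∑ p : Fin N, ∑ q : Fin N,
        if p < q then (2*(y p - y q)*Real.log ((y p - y q)/Λ) + (y p - y q)) • LA p q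
                    + (2*(y p + y q)*Real.log ((y p + y q)/Λ) + (y p + y q)) • LB p q else 0) y := by
    apply HasFDerivAt.fun_sum
    intro p _
    apply HasFDerivAt.fun_sum
    intro q _
    by_cases h : p < q
    · simp only [if_pos h]
      have ha : y p - y q ≠ 0 := sub_ne_zero.2 (ne_of_gt (hlt p q h))
      have hb : y p + y q ≠ 0 := ne_of_gt (add_pos (hpos p) (hpos q))
      have h1 := (hasDerivAt_phi Λ (y p - y q) hΛ ha).comp_hasFDerivAt y (LA p q).hasFDerivAt
      have h2 := (hasDerivAt_phi Λ (y p + y q) hΛ hb).comp_hasFDerivAt y (LB p q).hasFDerivAt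
      simp only [Function.comp_def, LA_apply, LB_apply] at h1 h2
      have := h1.fun_add h2
      simpa [Function.comp_def] using this
    · simp only [if_neg h]
      exact hasFDerivAt_const 0 y
  have hS2 : HasFDerivAt (fun x : Fin N → ℝ => ∑ p : Fin N, (x p)^2 * Real.log (x p / Λ))
      (∑ p : Fin N, (2*(y p)*Real.log ((y p)/Λ) + y p) • prj p) y := by
    apply HasFDerivAt.fun_sum
    intro p _
    have := (hasDerivAt_phi Λ (y p) hΛ (ne_of_gt (hpos p))).comp_hasFDerivAt y (prj p).hasFDerivAt
    simpa [Function.comp_def] using this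
  have hS3 : HasFDerivAt (fun x : Fin N → ℝ => ∑ p : Fin N, (x p)^2)
      (∑ p : Fin N, (2 * y p) • prj p) y := by
    apply HasFDerivAt.fun_sum
    intro p _
    have h1 : HasDerivAt (fun u : ℝ => u^2) (2 * y p) (y p) := by
      simpa using hasDerivAt_pow 2 (y p)
    have := h1.comp_hasFDerivAt y (prj p).hasFDerivAt
    simpa [Function.comp_def] using this
  exact ((hS.const_mul (1/2)).add (hS2.const_mul η)).add (hS3.const_mul ζ)

noncomputable def dd {N : ℕ} (i p : Fin N) : ℝ := if p = i then 1 else 0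

/-- explicit formula for the `i`-th partial derivative of FBCD -/
noncomputable def Gfun (N : ℕ) (η ζ Λ : ℝ) (i : Fin N) (y : Fin N → ℝ) : ℝ :=
  (1/2) * ∑ p : Fin N, ∑ q : Fin N,
      (if p < q then (2*(y p - y q)*Real.log ((y p - y q)/Λ) + (y p - y q)) * (dd i p - dd i q)
                    + (2*(y p + y q)*Real.log ((y p + y q)/Λ) + (y p + y q)) * (dd i p + dd i q)
       else 0)
  + η * (2*(y i)*Real.log (y i / Λ) + y i)
  + ζ * (2 * y i)

lemma isOpen_cone (N : ℕ) : IsOpen (cone N) := by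
  have h1 : cone N =
      (⋂ p : Fin N, ⋂ q : Fin N, {y : Fin N → ℝ | p < q → y q < y p}) ∩
        ⋂ p : Fin N, {y : Fin N → ℝ | 0 < y p} := by
    ext y
    simp only [cone, Set.mem_setOf_eq, Set.mem_inter_iff, Set.mem_iInter]
    exact ⟨fun h => ⟨fun p q hpq => h.1 hpq, h.2⟩, fun h => ⟨fun p q hpq => h.1 p q hpq, h.2⟩⟩
  rw [h1]
  apply IsOpen.inter
  · apply isOpen_iInter_of_finite
    intro p
    apply isOpen_iInter_of_finite
    intro q
    by_cases h : p < q
    · simp only [h, true_implies]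
      exact isOpen_lt (continuous_apply q) (continuous_apply p)
    · simp only [h, false_implies]
      simp only [Set.setOf_true]
      exact isOpen_univ
  · apply isOpen_iInter_of_finite
    intro p
    exact isOpen_lt continuous_const (continuous_apply p)

lemma pd_FBCD {N : ℕ} (η ζ Λ : ℝ) (hΛ : Λ ≠ 0) {y : Fin N → ℝ} (hy : y ∈ cone N) (i : Fin N) :
    pd i (FBCD N η ζ Λ) y = Gfun N η ζ Λ i y := by
  unfold pd
  rw [(hasFDerivAt_FBCD η ζ Λ hΛ hy).fderiv]
  unfold DF Gfun
  simp only [ContinuousLinearMap.add_apply, ContinuousLinearMap.smul_apply,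
    ContinuousLinearMap.coe_sum', Finset.sum_apply,
    apply_ite (fun (L : (Fin N → ℝ) →L[ℝ] ℝ) => L (Pi.single i 1)),
    ContinuousLinearMap.zero_apply, LA_apply, LB_apply, prj_apply,
    Pi.single_apply, smul_eq_mul]
  have collapse : ∀ c : ℝ, ∀ f : Fin N → ℝ,
      (∑ p : Fin N, f p * (if p = i then (1:ℝ) else 0)) = f i := by
    intro c f
    simp [mul_ite, Finset.sum_ite_eq']
  rw [collapse 0, collapse 0]
  simp only [dd]

/-- derivative of Gfun as a continuous linear map -/
noncomputable def DG {N : ℕ} (η ζ Λ : ℝ) (i : Fin N) (y : Fin N → ℝ) : (Fin N → ℝ) →L[ℝ] ℝ :=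
  (1/2 : ℝ) • (∑ p : Fin N, ∑ q : Fin N,
      if p < q then ((2*Real.log ((y p - y q)/Λ) + 3) * (dd i p - dd i q)) • LA p q
                    + ((2*Real.log ((y p + y q)/Λ) + 3) * (dd i p + dd i q)) • LB p q else 0)
  + η • ((2*Real.log (y i / Λ) + 3) • prj i)
  + ζ • ((2:ℝ) • prj i)

lemma hasFDerivAt_Gfun {N : ℕ} (η ζ Λ : ℝ) (hΛ : Λ ≠ 0) {y : Fin N → ℝ} (hy : y ∈ cone N)
    (i : Fin N) : HasFDerivAt (Gfun N η ζ Λ i) (DG η ζ Λ i y) y := by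
  obtain ⟨hlt, hpos⟩ := cone_mem hy
  have hS : HasFDerivAt
      (fun x : Fin N → ℝ => ∑ p : Fin N, ∑ q : Fin N,
        (if p < q then (2*(x p - x q)*Real.log ((x p - x q)/Λ) + (x p - x q)) * (dd i p - dd i q)
                    + (2*(x p + x q)*Real.log ((x p + x q)/Λ) + (x p + x q)) * (dd i p + dd i q)
         else 0))
      (∑ p : Fin N, ∑ q : Fin N,
        if p < q then ((2*Real.log ((y p - y q)/Λ) + 3) * (dd i p - dd i q)) • LA p q
                    + ((2*Real.log ((y p + y q)/Λ) + 3) * (dd i p + dd i q)) • LB p q else 0) y := by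
    apply HasFDerivAt.fun_sum
    intro p _
    apply HasFDerivAt.fun_sum
    intro q _
    by_cases h : p < q
    · simp only [if_pos h]
      have ha : y p - y q ≠ 0 := sub_ne_zero.2 (ne_of_gt (hlt p q h))
      have hb : y p + y q ≠ 0 := ne_of_gt (add_pos (hpos p) (hpos q))
      have h1 := ((hasDerivAt_phi' Λ (y p - y q) hΛ ha).mul_const
        (dd i p - dd i q)).comp_hasFDerivAt y (LA p q).hasFDerivAt
      have h2 := ((hasDerivAt_phi' Λ (y p + y q) hΛ hb).mul_const
        (dd i p + dd i q)).comp_hasFDerivAt y (LB p q).hasFDerivAt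
      have := h1.fun_add h2
      simpa [Function.comp_def] using this
    · simp only [if_neg h]
      exact hasFDerivAt_const 0 y
  have hS2 : HasFDerivAt (fun x : Fin N → ℝ => 2*(x i)*Real.log (x i / Λ) + x i)
      ((2*Real.log (y i / Λ) + 3) • prj i) y := by
    have := (hasDerivAt_phi' Λ (y i) hΛ (ne_of_gt (hpos i))).comp_hasFDerivAt y
      (prj i).hasFDerivAt
    simpa [Function.comp_def] using this
  have hS3 : HasFDerivAt (fun x : Fin N → ℝ => 2 * x i) ((2:ℝ) • prj i) y := by
    have h1 : HasDerivAt (fun u : ℝ => 2*u) 2 (y i) := by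
      simpa using (hasDerivAt_id (y i)).const_mul (2:ℝ)
    have := h1.comp_hasFDerivAt y (prj i).hasFDerivAt
    simpa [Function.comp_def] using this
  exact ((hS.const_mul (1/2)).add (hS2.const_mul η)).add (hS3.const_mul ζ)

lemma dd_self {N : ℕ} (i : Fin N) : dd i i = 1 := by simp [dd]

lemma sum_collapse1 {N : ℕ} (i : Fin N) (h : Fin N → ℝ) :
    (∑ p : Fin N, dd i p * h p) = h i := by
  simp [dd, ite_mul, Finset.sum_ite_eq']

/-- the double sum in the diagonal Hessian entry -/
lemma key_sum {N : ℕ} (i : Fin N) (x : Fin N → ℝ) (Λ : ℝ) :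
    (1/2) * ∑ p : Fin N, ∑ q : Fin N,
      (if p < q then (2*Real.log ((x p - x q)/Λ)+3) * (dd i p - dd i q) * (dd i p - dd i q)
                    + (2*Real.log ((x p + x q)/Λ)+3) * (dd i p + dd i q) * (dd i p + dd i q)
       else 0)
    = (∑ q ∈ Finset.univ.filter (fun q => i < q),
          (Real.log ((x i - x q)/Λ) + Real.log ((x i + x q)/Λ) + 3))
      + (∑ p ∈ Finset.univ.filter (fun p => p < i),
          (Real.log ((x p - x i)/Λ) + Real.log ((x p + x i)/Λ) + 3)) := by
  set g : Fin N → Fin N → ℝ :=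
    fun p q => Real.log ((x p - x q)/Λ) + Real.log ((x p + x q)/Λ) + 3 with hg
  have hstep : ∀ p q : Fin N, p < q →
      (1/2)*((2*Real.log ((x p - x q)/Λ)+3) * (dd i p - dd i q) * (dd i p - dd i q)
            + (2*Real.log ((x p + x q)/Λ)+3) * (dd i p + dd i q) * (dd i p + dd i q))
      = dd i p * g p q + dd i q * g p q := by
    intro p q hpq
    unfold dd
    by_cases hp : p = i <;> by_cases hq : q = i
    · exact absurd (hp.trans hq.symm ▸ hpq) (by simp [hp, hq])
    all_goals simp only [hp, hq, if_pos, if_neg, if_true, if_false, hg]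
    all_goals ring_nf
  have step1 : (1/2) * ∑ p : Fin N, ∑ q : Fin N,
      (if p < q then (2*Real.log ((x p - x q)/Λ)+3) * (dd i p - dd i q) * (dd i p - dd i q)
                    + (2*Real.log ((x p + x q)/Λ)+3) * (dd i p + dd i q) * (dd i p + dd i q)
       else 0)
      = ∑ p : Fin N, ∑ q : Fin N, (if p < q then dd i p * g p q + dd i q * g p q else 0) := by
    rw [Finset.mul_sum]
    refine Finset.sum_congr rfl fun p _ => ?_
    rw [Finset.mul_sum]
    refine Finset.sum_congr rfl fun q _ => ?_
    by_cases h : p < q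
    · rw [if_pos h, if_pos h, hstep p q h]
    · simp [h]
  rw [step1]
  have step2 : ∀ p : Fin N, (∑ q : Fin N, (if p < q then dd i p * g p q + dd i q * g p q else 0))
      = dd i p * (∑ q : Fin N, if p < q then g p q else 0)
        + (if p < i then g p i else 0) := by
    intro p
    rw [Finset.mul_sum]
    have : ∀ q : Fin N, (if p < q then dd i p * g p q + dd i q * g p q else 0)
        = dd i p * (if p < q then g p q else 0) + (if q = i then (if p < q then g p q else 0) else 0) := by
      intro q
      unfold dd
      by_cases hq : q = i <;> by_cases h : p < q <;> simp [hq, h] <;> split_ifs <;> simp_all <;> ring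
    rw [Finset.sum_congr rfl fun q _ => this q, Finset.sum_add_distrib,
      Finset.sum_ite_eq' Finset.univ i (fun q => if p < q then g p q else 0)]
    simp
  rw [Finset.sum_congr rfl fun p _ => step2 p, Finset.sum_add_distrib,
    sum_collapse1 i (fun p => ∑ q : Fin N, if p < q then g p q else 0)]
  rw [Finset.sum_ite, Finset.sum_const_zero, add_zero, Finset.sum_ite, Finset.sum_const_zero, add_zero]

lemma card_split {N : ℕ} (i : Fin N) :
    (Finset.univ.filter (fun q : Fin N => i < q)).card
      + (Finset.univ.filter (fun q : Fin N => q < i)).card = N - 1 := by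
  have hdisj : Disjoint (Finset.univ.filter (fun q : Fin N => i < q))
      (Finset.univ.filter (fun q : Fin N => q < i)) := by
    rw [Finset.disjoint_left]
    intro q hq hq'
    simp only [Finset.mem_filter] at hq hq'
    exact absurd (hq.2.trans hq'.2) (lt_irrefl i)
  rw [← Finset.card_union_of_disjoint hdisj]
  have : (Finset.univ.filter (fun q : Fin N => i < q))
      ∪ (Finset.univ.filter (fun q : Fin N => q < i)) = Finset.univ.erase i := by
    ext q
    simp only [Finset.mem_union, Finset.mem_filter, Finset.mem_erase, Finset.mem_univ,
      true_and, and_true]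
    constructor
    · rintro (h | h)
      · exact ne_of_gt h
      · exact ne_of_lt h
    · intro h
      rcases lt_or_gt_of_ne h with h' | h'
      · exact Or.inr h'
      · exact Or.inl h'
  rw [this, Finset.card_erase_of_mem (Finset.mem_univ i), Finset.card_univ, Fintype.card_fin]

/-- for the BCD-type prepotential with
`Λ = e^{(6(N-1+η)+4ζ)/(4(N-1+η))}`, on the cone,
`e^{T_ii} = x_i^{2η} · ∏_{q>i} (x_i² - x_q²) · ∏_{q<i} (x_q² - x_i²)`. -/
theorem bcd_hessian_diag (N : ℕ) (hN : 2 ≤ N) (η ζ : ℝ) (hη : 0 ≤ η)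
    (x : Fin N → ℝ) (hx : x ∈ cone N) (i : Fin N) :
    Real.exp (hess
        (FBCD N η ζ (Real.exp ((6*((N : ℝ) - 1 + η) + 4*ζ) / (4*((N : ℝ) - 1 + η)))))
        i i x) =
      (x i) ^ (2*η : ℝ)
        * (∏ q ∈ Finset.univ.filter (fun q => i < q), ((x i)^2 - (x q)^2))
        * (∏ q ∈ Finset.univ.filter (fun q => q < i), ((x q)^2 - (x i)^2)) := by
  set E : ℝ := (6*((N : ℝ) - 1 + η) + 4*ζ) / (4*((N : ℝ) - 1 + η)) with hE
  set Λ : ℝ := Real.exp E with hΛdef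
  have hΛpos : 0 < Λ := Real.exp_pos E
  have hΛ : Λ ≠ 0 := ne_of_gt hΛpos
  have hlogΛ : Real.log Λ = E := Real.log_exp E
  obtain ⟨hanti, hpos⟩ := hx
  have hxc : x ∈ cone N := ⟨hanti, hpos⟩
  -- identify the Hessian entry
  have h1 : hess (FBCD N η ζ Λ) i i x = DG η ζ Λ i x (Pi.single i 1) := by
    have h0 : hess (FBCD N η ζ Λ) i i x
        = fderiv ℝ (pd i (FBCD N η ζ Λ)) x (Pi.single i 1) := rfl
    rw [h0]
    have hev : pd i (FBCD N η ζ Λ) =ᶠ[nhds x] Gfun N η ζ Λ i :=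
      Filter.eventuallyEq_of_mem ((isOpen_cone N).mem_nhds hxc)
        (fun y hy => pd_FBCD η ζ Λ hΛ hy i)
    rw [hev.fderiv_eq, (hasFDerivAt_Gfun η ζ Λ hΛ hxc i).fderiv]
  -- evaluate DG at the basis vector
  have h2 : DG η ζ Λ i x (Pi.single i 1)
      = (1/2) * (∑ p : Fin N, ∑ q : Fin N,
          (if p < q then (2*Real.log ((x p - x q)/Λ)+3) * (dd i p - dd i q) * (dd i p - dd i q)
                        + (2*Real.log ((x p + x q)/Λ)+3) * (dd i p + dd i q) * (dd i p + dd i q)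
           else 0))
        + η * (2*Real.log (x i / Λ) + 3) + ζ * 2 := by
    unfold DG
    simp only [ContinuousLinearMap.add_apply, ContinuousLinearMap.smul_apply,
      ContinuousLinearMap.coe_sum', Finset.sum_apply,
      apply_ite (fun (L : (Fin N → ℝ) →L[ℝ] ℝ) => L (Pi.single i 1)),
      ContinuousLinearMap.zero_apply, LA_apply, LB_apply, prj_apply,
      Pi.single_apply, smul_eq_mul]
    simp [dd]
  rw [h1, h2, key_sum i x Λ]
  -- rewrite the two filtered sums
  have hA : ∀ q ∈ Finset.univ.filter (fun q : Fin N => i < q),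
      Real.log ((x i - x q)/Λ) + Real.log ((x i + x q)/Λ) + 3
        = Real.log ((x i)^2 - (x q)^2) + (3 - 2*Real.log Λ) := by
    intro q hq
    have hiq : i < q := (Finset.mem_filter.1 hq).2
    have ha : 0 < x i - x q := sub_pos.2 (hanti hiq)
    have hb : 0 < x i + x q := add_pos (hpos i) (hpos q)
    rw [Real.log_div (ne_of_gt ha) hΛ, Real.log_div (ne_of_gt hb) hΛ,
      show (x i)^2 - (x q)^2 = (x i - x q) * (x i + x q) from by ring,
      Real.log_mul (ne_of_gt ha) (ne_of_gt hb)]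
    ring
  have hB : ∀ p ∈ Finset.univ.filter (fun p : Fin N => p < i),
      Real.log ((x p - x i)/Λ) + Real.log ((x p + x i)/Λ) + 3
        = Real.log ((x p)^2 - (x i)^2) + (3 - 2*Real.log Λ) := by
    intro p hp
    have hpi : p < i := (Finset.mem_filter.1 hp).2
    have ha : 0 < x p - x i := sub_pos.2 (hanti hpi)
    have hb : 0 < x p + x i := add_pos (hpos p) (hpos i)
    rw [Real.log_div (ne_of_gt ha) hΛ, Real.log_div (ne_of_gt hb) hΛ,
      show (x p)^2 - (x i)^2 = (x p - x i) * (x p + x i) from by ring,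
      Real.log_mul (ne_of_gt ha) (ne_of_gt hb)]
    ring
  rw [Finset.sum_congr rfl hA, Finset.sum_congr rfl hB,
    Finset.sum_add_distrib, Finset.sum_add_distrib, Finset.sum_const, Finset.sum_const,
    nsmul_eq_mul, nsmul_eq_mul]
  -- the constant terms vanish
  have hM : ((N : ℝ) - 1 + η) ≠ 0 := by
    have : (2:ℝ) ≤ (N:ℝ) := by exact_mod_cast hN
    nlinarith
  have hcard : ((Finset.univ.filter (fun q : Fin N => i < q)).card : ℝ)
      + ((Finset.univ.filter (fun q : Fin N => q < i)).card : ℝ) = (N : ℝ) - 1 := by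
    have := card_split i
    have h1N : 1 ≤ N := le_trans (by norm_num) hN
    have : ((Finset.univ.filter (fun q : Fin N => i < q)).card
        + (Finset.univ.filter (fun q : Fin N => q < i)).card : ℕ) = N - 1 := this
    calc ((Finset.univ.filter (fun q : Fin N => i < q)).card : ℝ)
          + ((Finset.univ.filter (fun q : Fin N => q < i)).card : ℝ)
        = (((Finset.univ.filter (fun q : Fin N => i < q)).card
            + (Finset.univ.filter (fun q : Fin N => q < i)).card : ℕ) : ℝ) := by push_cast; ring
      _ = ((N - 1 : ℕ) : ℝ) := by rw [this]
      _ = (N : ℝ) - 1 := by rw [Nat.cast_sub h1N]; norm_num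
  have hconst : ∀ cA cB : ℕ, (cA : ℝ) + (cB : ℝ) = (N : ℝ) - 1 →
      (cA : ℝ) * (3 - 2*Real.log Λ) + (cB : ℝ) * (3 - 2*Real.log Λ)
        + η * (2*Real.log (x i / Λ) + 3) + ζ * 2
      = (∑ q ∈ Finset.univ.filter (fun q : Fin N => i < q), (0:ℝ))
        + 2*η*Real.log (x i) := by
    intro cA cB hc
    rw [Real.log_div (ne_of_gt (hpos i)) hΛ, hlogΛ, Finset.sum_const_zero]
    have h2ME : 2 * ((N : ℝ) - 1 + η) * E = 3*((N : ℝ) - 1 + η) + 2*ζ := by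
      rw [hE]
      field_simp
      ring
    linear_combination (3 - 2*E) * hc - h2ME
  have hzero := hconst _ _ hcard
  simp only [Finset.sum_const_zero, zero_add] at hzero
  set SA := ∑ q ∈ Finset.univ.filter (fun q : Fin N => i < q),
      Real.log ((x i)^2 - (x q)^2) with hSA
  set SB := ∑ p ∈ Finset.univ.filter (fun p : Fin N => p < i),
      Real.log ((x p)^2 - (x i)^2) with hSB
  have harg : SA + ((Finset.univ.filter (fun q : Fin N => i < q)).card : ℝ)
        * (3 - 2*Real.log Λ)
      + (SB + ((Finset.univ.filter (fun q : Fin N => q < i)).card : ℝ)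
        * (3 - 2*Real.log Λ))
      + η * (2*Real.log (x i / Λ) + 3) + ζ * 2
      = SA + (SB + 2*η*Real.log (x i)) := by linear_combination hzero
  rw [harg, Real.exp_add, Real.exp_add, hSA, hSB, Real.exp_sum, Real.exp_sum]
  have hPA : (∏ q ∈ Finset.univ.filter (fun q : Fin N => i < q),
        Real.exp (Real.log ((x i)^2 - (x q)^2)))
      = ∏ q ∈ Finset.univ.filter (fun q : Fin N => i < q), ((x i)^2 - (x q)^2) := by
    refine Finset.prod_congr rfl fun q hq => ?_
    have hiq : i < q := (Finset.mem_filter.1 hq).2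
    exact Real.exp_log (by nlinarith [hanti hiq, hpos q, hpos i])
  have hPB : (∏ p ∈ Finset.univ.filter (fun p : Fin N => p < i),
        Real.exp (Real.log ((x p)^2 - (x i)^2)))
      = ∏ p ∈ Finset.univ.filter (fun p : Fin N => p < i), ((x p)^2 - (x i)^2) := by
    refine Finset.prod_congr rfl fun p hp => ?_
    have hpi : p < i := (Finset.mem_filter.1 hp).2
    exact Real.exp_log (by nlinarith [hanti hpi, hpos p, hpos i])
  rw [hPA, hPB, show Real.exp (2*η*Real.log (x i)) = x i ^ (2*η : ℝ) from by
    rw [Real.rpow_def_of_pos (hpos i), mul_comm]]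
  ring
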